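/- arXiv:1705.03857 — 3 statements merged into one kernel-verified Lean document; each statement's English description precedes it below -/
import Mathlib

section
/- For every n ≥ 0, the quotient q_n = d_n/(n+1) is a squarefree positive integer, where d_n is the n-th power-sum denominator. -/
open Polynomial Finset

/-- `P` agrees at every natural `x` with the power sum `1^n + 2^n + ... + x^n`. -/
def evalPS (n : ℕ) (P : Polynomial ℚ) : Prop :=
  ∀ x : ℕ, P.eval (x : ℚ) = ∑ k ∈ Finset.range (x + 1), (k : ℚ) ^ n

/-- `P` agrees at every natural `x` with `1^n + 2^n + ... + (x-1)^n`. -/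
def evalPS' (n : ℕ) (P : Polynomial ℚ) : Prop :=
  ∀ x : ℕ, P.eval (x : ℚ) = ∑ k ∈ Finset.range x, (k : ℚ) ^ n

/-- all coefficients of `P` are integers. -/
def isIntPoly (P : Polynomial ℚ) : Prop := ∀ i, ∃ z : ℤ, P.coeff i = (z : ℚ)

/-- `d` is the least positive integer such that `d • P` has integer coefficients. -/
def isDenom (P : Polynomial ℚ) (d : ℕ) : Prop :=
  0 < d ∧ isIntPoly ((d : ℚ) • P) ∧
    ∀ e : ℕ, 0 < e → isIntPoly ((e : ℚ) • P) → d ≤ e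

/-!
By Faulhaber's formula, `P = ∑_{i ≤ n} C(n+1, i) B_i (X + 1)^(n+1-i) / (n+1)`. Its coefficient of
`X^(n+1)` is `1/(n+1)`, so `n + 1 ∣ d`. By von Staudt–Clausen the primorial `(i+1)#` clears the
denominator of `B_i`, so `(n+1) · (n+1)#` is an admissible multiplier for `P`. The admissible
multipliers are closed under remainders, so the least one, `d`, divides it, and `d / (n+1)` divides
the squarefree number `(n+1)#`.
-/

lemma evalPS.eq {n : ℕ} {P Q : ℚ[X]} (hP : evalPS n P) (hQ : evalPS n Q) : P = Q := by
  refine eq_of_infinite_eval_eq P Q ((Set.infinite_range_of_injective Nat.cast_injective).mono ?_)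
  rintro _ ⟨x, rfl⟩
  exact (hP x).trans (hQ x).symm

lemma isIntPoly_of_mem_lifts {P : ℚ[X]} (hP : P ∈ lifts (Int.castRingHom ℚ)) : isIntPoly P := by
  intro i
  obtain ⟨z, hz⟩ := (lifts_iff_coeff_lifts P).mp hP i
  exact ⟨z, hz.symm⟩

lemma isDenom.dvd {P : ℚ[X]} {d e : ℕ} (hd : isDenom P d) (he : isIntPoly ((e : ℚ) • P)) :
    d ∣ e := by
  obtain ⟨hd0, hdInt, hmin⟩ := hd
  have hmod : isIntPoly (((e % d : ℕ) : ℚ) • P) := by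
    intro i
    obtain ⟨a, ha⟩ := hdInt i
    obtain ⟨b, hb⟩ := he i
    refine ⟨b - (e / d : ℕ) * a, ?_⟩
    simp only [coeff_smul, smul_eq_mul] at ha hb ⊢
    rw [Nat.mod_eq_sub_mul_div, Nat.cast_sub (Nat.mul_div_le e d), Nat.cast_mul, Int.cast_sub,
      Int.cast_mul, Int.cast_natCast]
    linear_combination hb - ((e / d : ℕ) : ℚ) * ha
  refine Nat.dvd_of_mod_eq_zero (Nat.eq_zero_of_not_pos fun hpos => ?_)
  exact (hmin _ hpos hmod).not_gt (Nat.mod_lt e hd0)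

lemma dvd_of_isIntPoly_smul {P : ℚ[X]} {m k d : ℕ} (hk : k ≠ 0) (hcoeff : P.coeff m = (k : ℚ)⁻¹)
    (hd : isIntPoly ((d : ℚ) • P)) : k ∣ d := by
  obtain ⟨z, hz⟩ := hd m
  rw [coeff_smul, smul_eq_mul, hcoeff, ← div_eq_mul_inv, div_eq_iff (by exact_mod_cast hk)] at hz
  exact Int.natCast_dvd_natCast.mp ⟨z, by rw [mul_comm]; exact_mod_cast hz⟩

lemma exists_int_primorial_mul_bernoulli (i : ℕ) :
    ∃ z : ℤ, (primorial (i + 1) : ℚ) * _root_.bernoulli i = z := by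
  obtain ⟨k, rfl | rfl⟩ := Nat.even_or_odd' i
  · obtain ⟨z, hz⟩ := Bernoulli.vonStaudt_clausen k
    set S := (range (2 * k + 2)).filter fun p => p.Prime ∧ (p - 1) ∣ 2 * k
    have hdiv : ∀ p ∈ S,
        (primorial (2 * k + 1) : ℚ) * (1 / p) = ((primorial (2 * k + 1) / p : ℕ) : ℚ) := by
      intro p hp
      obtain ⟨hlt, hprime, -⟩ := by simpa [S] using hp
      rw [Nat.cast_div (hprime.dvd_primorial_iff.mpr (by omega)) (by exact_mod_cast hprime.ne_zero),
        mul_one_div]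
    refine ⟨primorial (2 * k + 1) * z - ∑ p ∈ S, ((primorial (2 * k + 1) / p : ℕ) : ℤ), ?_⟩
    simp only [Int.cast_sub, Int.cast_mul, Int.cast_sum, Int.cast_natCast]
    rw [hz, ← sum_congr rfl hdiv, ← mul_sum]
    ring
  · rcases k.eq_zero_or_pos with rfl | hk
    · exact ⟨-1, by norm_num [_root_.bernoulli_one]⟩
    · exact ⟨0, by rw [bernoulli_eq_zero_of_odd (odd_two_mul_add_one k) (by omega)]; simp⟩

noncomputable def powerSumPoly (n : ℕ) : ℚ[X] :=
  ∑ i ∈ range (n + 1), C (_root_.bernoulli i * (n + 1).choose i / (n + 1)) * (X + 1) ^ (n + 1 - i)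

lemma evalPS_powerSumPoly (n : ℕ) : evalPS n (powerSumPoly n) := by
  intro x
  rw [sum_range_pow, powerSumPoly, eval_finsetSum]
  refine sum_congr rfl fun i _ => ?_
  simp only [eval_mul, eval_C, eval_pow, eval_add, eval_X, eval_one]
  push_cast
  ring

lemma coeff_powerSumPoly_succ (n : ℕ) : (powerSumPoly n).coeff (n + 1) = ((n + 1 : ℕ) : ℚ)⁻¹ := by
  rw [powerSumPoly, finsetSum_coeff, sum_range_succ', sum_eq_zero]
  · simp [coeff_X_add_one_pow]
  · intro i _
    rw [coeff_C_mul, coeff_X_add_one_pow,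
      Nat.choose_eq_zero_of_lt (by omega : n + 1 - (i + 1) < n + 1), Nat.cast_zero, mul_zero]

lemma isIntPoly_smul_powerSumPoly (n : ℕ) :
    isIntPoly ((((n + 1) * primorial (n + 1) : ℕ) : ℚ) • powerSumPoly n) := by
  apply isIntPoly_of_mem_lifts
  rw [powerSumPoly, smul_sum]
  refine Subsemiring.sum_mem _ fun i hi => ?_
  obtain ⟨z, hz⟩ := exists_int_primorial_mul_bernoulli i
  obtain ⟨m, hm⟩ := primorial_dvd_primorial (show i + 1 ≤ n + 1 by simp at hi; omega)
  have hcoeff : (((n + 1) * primorial (n + 1) : ℕ) : ℚ) •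
      (C (_root_.bernoulli i * (n + 1).choose i / (n + 1)) * (X + 1) ^ (n + 1 - i))
      = C ((m * z * (n + 1).choose i : ℤ) : ℚ) * (X + 1) ^ (n + 1 - i) := by
    rw [smul_eq_C_mul, ← mul_assoc, ← C_mul, hm]
    congr 2
    push_cast
    rw [← hz]
    field_simp
  rw [hcoeff]
  exact mul_mem (C'_mem_lifts ⟨_, rfl⟩) (pow_mem (add_mem (X_mem_lifts _) (one_mem _)) _)

theorem stmt2 (n : ℕ) (P : Polynomial ℚ) (d : ℕ)
    (hP : evalPS n P) (hd : isDenom P d) :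
    (n + 1) ∣ d ∧ 0 < d / (n + 1) ∧ Squarefree (d / (n + 1)) := by
  obtain rfl := hP.eq (evalPS_powerSumPoly n)
  obtain ⟨q, rfl⟩ : n + 1 ∣ d :=
    dvd_of_isIntPoly_smul n.succ_ne_zero (coeff_powerSumPoly_succ n) hd.2.1
  have hq : q ∣ primorial (n + 1) :=
    Nat.dvd_of_mul_dvd_mul_left n.succ_pos (hd.dvd (isIntPoly_smul_powerSumPoly n))
  rw [Nat.mul_div_cancel_left q n.succ_pos]
  exact ⟨dvd_mul_right _ _, Nat.pos_of_mul_pos_left hd.1,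
    (squarefree_primorial _).squarefree_of_dvd hq⟩
end

section
/- For every odd prime p, setting n = 2p-2, the prime p divides q_n and p = M_n, where M_n = (n+2)/2; hence the bound M_n on prime factors of q_n is attained for infinitely many even n, and in particular the sequence (q_n) is unbounded. -/
/-!
The power-sum polynomial `P` of exponent `n` has leading term `X^(n+1)/(n+1)`, so any `e` with
`e • P` integral is divisible by `n + 1`. For a prime `p` with `(p - 1) ∣ n`, an integral
polynomial `Q = e • P` satisfies `Q(p) ≡ Q(0) = 0 (mod p)`, while by Fermat
`Q(p) = e (1^n + ⋯ + p^n) ≡ -e (mod p)`; hence also `p ∣ e`. For `n = 2p - 2` both apply and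
`p`, `2p - 1` are coprime, so `p (2p - 1)` divides the denominator `d` and `p ∣ d / (n + 1)`.
Letting `p` run over the primes makes `d / (n + 1)` unbounded.
-/

open Polynomial Finset

/-- Faulhaber's formula `∑_{k ≤ x} k^n = x^n + ∑_{i ≤ n} B_i (n+1 choose i) x^(n+1-i) / (n+1)`,
with `B_1 = -1/2`. -/
noncomputable def faulhaber (n : ℕ) : ℚ[X] :=
  X ^ n + ∑ i ∈ range (n + 1), C (_root_.bernoulli i * (n + 1).choose i / (n + 1)) * X ^ (n + 1 - i)

theorem faulhaber_eval_natCast (n x : ℕ) :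
    (faulhaber n).eval (x : ℚ) = ∑ k ∈ range (x + 1), (k : ℚ) ^ n := by
  rw [sum_range_succ, sum_range_pow, faulhaber, add_comm]
  simp only [eval_add, eval_pow, eval_X, eval_finsetSum, eval_mul, eval_C]
  congr 1
  exact sum_congr rfl fun i _ => by ring

theorem faulhaber_coeff_succ (n : ℕ) : (faulhaber n).coeff (n + 1) = 1 / (n + 1) := by
  rw [faulhaber, coeff_add, coeff_X_pow, if_neg n.succ_ne_self, finsetSum_coeff,
    sum_eq_single_of_mem 0 (mem_range.2 n.succ_pos)]
  · simp
  · intro i _ hi0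
    rw [coeff_C_mul, coeff_X_pow, if_neg (by omega), mul_zero]

namespace evalPS

variable {n : ℕ} {P : ℚ[X]}

theorem eq_faulhaber (hP : evalPS n P) : P = faulhaber n := by
  refine eq_of_infinite_eval_eq _ _ <| (Set.infinite_range_of_injective Nat.cast_injective).mono ?_
  rintro _ ⟨x, rfl⟩
  exact (hP x).trans (faulhaber_eval_natCast n x).symm

theorem coeff_succ (hP : evalPS n P) : P.coeff (n + 1) = 1 / (n + 1) := by
  rw [hP.eq_faulhaber, faulhaber_coeff_succ]

theorem succ_dvd_of_isIntPoly_smul {e : ℕ} (hP : evalPS n P) (he : isIntPoly ((e : ℚ) • P)) :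
    n + 1 ∣ e := by
  obtain ⟨z, hz⟩ := he (n + 1)
  rw [coeff_smul, hP.coeff_succ, smul_eq_mul, mul_one_div, div_eq_iff (by positivity)] at hz
  exact Int.natCast_dvd_natCast.1 ⟨z, by rw [mul_comm]; exact_mod_cast hz⟩

end evalPS

theorem isIntPoly.exists_map_eq {P : ℚ[X]} (hP : isIntPoly P) :
    ∃ Q : ℤ[X], Q.map (Int.castRingHom ℚ) = P := by
  rw [← mem_lifts, lifts_iff_coeff_lifts]
  intro i
  obtain ⟨z, hz⟩ := hP i
  exact ⟨z, hz.symm⟩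

theorem ZMod.sum_range_pow_eq_neg_one {p n : ℕ} [Fact p.Prime] (hn : n ≠ 0) (hpn : p - 1 ∣ n) :
    ∑ k ∈ range p, (k : ZMod p) ^ n = -1 := by
  have hp := (Fact.out : p.Prime).pos
  have hunit : ∀ k ∈ Ico 1 p, (k : ZMod p) ^ n = 1 := by
    intro k hk
    obtain ⟨hk1, hkp⟩ := mem_Ico.1 hk
    have hk0 : (k : ZMod p) ≠ 0 := by
      rw [Ne, ZMod.natCast_eq_zero_iff]
      exact Nat.not_dvd_of_pos_of_lt hk1 hkp
    obtain ⟨m, rfl⟩ := hpn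
    rw [pow_mul, ZMod.pow_card_sub_one_eq_one hk0, one_pow]
  rw [range_eq_Ico, sum_eq_sum_Ico_succ_bot hp, sum_congr rfl hunit, sum_const, Nat.card_Ico,
    nsmul_one, Nat.cast_sub hp, ZMod.natCast_self]
  simp [zero_pow hn]

theorem evalPS.prime_dvd_of_isIntPoly_smul {n p e : ℕ} {P : ℚ[X]} (hp : p.Prime) (hn : n ≠ 0)
    (hpn : p - 1 ∣ n) (hP : evalPS n P) (he : isIntPoly ((e : ℚ) • P)) : p ∣ e := by
  have := Fact.mk hp
  obtain ⟨Q, hQ⟩ := he.exists_map_eq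
  have hQeval : ∀ x : ℕ, Q.eval (x : ℤ) = e * ∑ k ∈ range (x + 1), (k : ℤ) ^ n := by
    intro x
    have := congrArg (eval (x : ℚ)) hQ
    rw [eval_natCast_map, eval_smul, hP x, smul_eq_mul, eq_intCast] at this
    exact_mod_cast this
  have hcong : ((Q.eval (p : ℤ) : ℤ) : ZMod p) = 0 := by
    have hdvd : (p : ℤ) ∣ Q.eval (p : ℤ) := by
      have hQ0 : Q.eval 0 = 0 := by simpa [zero_pow hn] using hQeval 0
      simpa [hQ0] using sub_dvd_eval_sub (p : ℤ) 0 Q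
    exact (ZMod.intCast_zmod_eq_zero_iff_dvd _ p).2 hdvd
  rw [hQeval p] at hcong
  push_cast at hcong
  rw [sum_range_succ, ZMod.natCast_self, zero_pow hn, add_zero,
    ZMod.sum_range_pow_eq_neg_one hn hpn, mul_neg_one, neg_eq_zero] at hcong
  exact (ZMod.natCast_eq_zero_iff e p).1 hcong

theorem Nat.Prime.coprime_two_mul_sub_one {p : ℕ} (hp : p.Prime) : p.Coprime (2 * p - 1) := by
  rw [hp.coprime_iff_not_dvd]
  intro h
  have h1 : p ∣ 1 := by
    have := Nat.dvd_sub (dvd_mul_left p 2) h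
    rwa [show 2 * p - (2 * p - 1) = 1 by have := hp.pos; omega] at this
  exact hp.one_lt.ne' (Nat.dvd_one.1 h1)

theorem evalPS.mul_dvd_of_isIntPoly_smul {p e : ℕ} {P : ℚ[X]} (hp : p.Prime)
    (hP : evalPS (2 * p - 2) P) (he : isIntPoly ((e : ℚ) • P)) : p * (2 * p - 1) ∣ e := by
  have hp2 := hp.two_le
  refine hp.coprime_two_mul_sub_one.mul_dvd_of_dvd_of_dvd ?_ ?_
  · exact hP.prime_dvd_of_isIntPoly_smul hp (by omega) ⟨2, by omega⟩ he
  · simpa [show 2 * p - 2 + 1 = 2 * p - 1 by omega] using hP.succ_dvd_of_isIntPoly_smul he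

theorem isDenom.prime_dvd_div {p d : ℕ} {P : ℚ[X]} (hp : p.Prime) (hP : evalPS (2 * p - 2) P)
    (hd : isDenom P d) : p ∣ d / (2 * p - 1) ∧ 0 < d / (2 * p - 1) := by
  obtain ⟨k, rfl⟩ := hP.mul_dvd_of_isIntPoly_smul hp hd.2.1
  have hk : 0 < k := Nat.pos_of_mul_pos_left hd.1
  rw [mul_comm p, mul_assoc, Nat.mul_div_cancel_left _ (by have := hp.two_le; omega)]
  exact ⟨dvd_mul_right p k, Nat.mul_pos hp.pos hk⟩

theorem stmt18_general (p : ℕ) (hp : p.Prime) :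
    (∀ (P : Polynomial ℚ) (d : ℕ), evalPS (2 * p - 2) P → isDenom P d →
      p ∣ d / (2 * p - 1) ∧ (2 * p - 2) + 2 = 2 * p) ∧
    ∀ N : ℕ, ∃ m : ℕ, Even m ∧
      ∀ (Q : Polynomial ℚ) (e : ℕ), evalPS m Q → isDenom Q e → N < e / (m + 1) := by
  refine ⟨fun P d hP hd => ⟨(hd.prime_dvd_div hp hP).1, by have := hp.two_le; omega⟩, fun N => ?_⟩
  obtain ⟨q, hNq, hq⟩ := Nat.exists_infinite_primes (N + 1)
  have hq2 := hq.two_le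
  refine ⟨2 * q - 2, ⟨q - 1, by omega⟩, fun Q e hQ he => ?_⟩
  obtain ⟨hdvd, hpos⟩ := he.prime_dvd_div hq hQ
  rw [show 2 * q - 2 + 1 = 2 * q - 1 by omega]
  exact hNq.trans (Nat.le_of_dvd hpos hdvd)

theorem stmt18 (p : ℕ) (hp : p.Prime) (hodd : Odd p) :
    (∀ (P : Polynomial ℚ) (d : ℕ), evalPS (2 * p - 2) P → isDenom P d →
      p ∣ d / (2 * p - 1) ∧ (2 * p - 2) + 2 = 2 * p) ∧
    ∀ N : ℕ, ∃ m : ℕ, Even m ∧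
      ∀ (Q : Polynomial ℚ) (e : ℕ), evalPS m Q → isDenom Q e → N < e / (m + 1) :=
  stmt18_general p hp
end

section
/- For every n ≥ 1, the denominator of the Bernoulli polynomial B_n(x) (the least positive integer D with D·B_n(x) ∈ ℤ[x]) is even and squarefree, and is divisible by the denominator of the Bernoulli number B_n. -/
open Polynomial Finset

/-!
By von Staudt–Clausen, `B_{2k} + ∑_{(p - 1) ∣ 2k} 1/p` is an integer, so the denominator of
`B_{2k}` is the product of the primes `p` with `(p - 1) ∣ 2k`: it is squarefree, and even for
`k ≥ 1` since `p = 2` always qualifies; the odd-index Bernoulli numbers are `-1/2` or `0`.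
The coefficients of `B_n(x)` are `C(n, j) B_j`, whose denominators are therefore squarefree, and
the denominator of `B_n(x)` is the lcm of these, hence squarefree. It is even because the
constant term is `B_n` and, for odd `n`, the coefficient of `x^(n-1)` is `-n/2`.
-/

theorem Rat.exists_intCast_eq_natCast_mul_iff {q : ℚ} {e : ℕ} :
    (∃ z : ℤ, (e : ℚ) * q = z) ↔ q.den ∣ e := by
  constructor
  · rintro ⟨z, hz⟩
    have hdvd : (q.den : ℤ) ∣ e * q.num := ⟨z, by
      have hq : (e : ℚ) * q.num = q.den * z := by rw [← Rat.mul_den_eq_num, ← hz]; ring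
      exact_mod_cast hq⟩
    have hnat := Int.natAbs_dvd_natAbs.mpr hdvd
    rw [Int.natAbs_mul, Int.natAbs_natCast, Int.natAbs_natCast] at hnat
    exact q.reduced.symm.dvd_of_dvd_mul_right hnat
  · rintro ⟨c, rfl⟩
    exact ⟨q.num * c, by push_cast; rw [← Rat.mul_den_eq_num]; ring⟩

theorem den_sum_one_div_primes {s : Finset ℕ} (hs : ∀ p ∈ s, p.Prime) :
    (∑ p ∈ s, (1 : ℚ) / p).den = ∏ p ∈ s, p := by
  have hden : ∀ p ∈ s, ((1 : ℚ) / p).den = p := fun p hp => by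
    rw [one_div, Rat.inv_natCast_den_of_pos (hs p hp).pos]
  refine Nat.dvd_antisymm ?_ ?_
  · exact (Rat.den_sum_dvd_prod_den s _).trans (prod_congr rfl hden).dvd
  · refine Finset.prod_primes_dvd _ (fun p hp => (hs p hp).prime) fun p hp => ?_
    set T := ∑ q ∈ s.erase p, (1 : ℚ) / q
    have hp_dvd : p ∣ (∑ q ∈ s, (1 : ℚ) / q).den * T.den := by
      have hsub := Rat.sub_den_dvd (∑ q ∈ s, (1 : ℚ) / q) T
      rw [← add_sum_erase s _ hp] at hsub ⊢
      rwa [add_sub_cancel_right, hden p hp] at hsub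
    have hT : ¬ p ∣ T.den := fun h => by
      obtain ⟨q, hq, hpq⟩ := ((hs p hp).prime.dvd_finsetProd_iff _).mp
        (h.trans (Rat.den_sum_dvd_prod_den _ _))
      rw [hden q (mem_of_mem_erase hq), Nat.prime_dvd_prime_iff_eq (hs p hp)
        (hs q (mem_of_mem_erase hq))] at hpq
      exact ne_of_mem_erase hq hpq.symm
    exact ((hs p hp).dvd_mul.mp hp_dvd).resolve_right hT

theorem squarefree_prod_primes {s : Finset ℕ} (hs : ∀ p ∈ s, p.Prime) :
    Squarefree (∏ p ∈ s, p) :=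
  Finset.squarefree_prod_of_pairwise_isCoprime
    (fun p hp q hq hpq => Nat.coprime_iff_isRelPrime.mp
      ((Nat.coprime_primes (hs p hp) (hs q hq)).mpr hpq))
    fun p hp => (hs p hp).squarefree

theorem den_bernoulli_two_mul (k : ℕ) :
    (_root_.bernoulli (2 * k)).den =
      ∏ p ∈ range (2 * k + 2) with p.Prime ∧ (p - 1) ∣ 2 * k, p := by
  obtain ⟨z, hz⟩ := Bernoulli.vonStaudt_clausen k
  rw [← den_sum_one_div_primes fun p hp => (mem_filter.mp hp).2.1, eq_sub_of_add_eq hz.symm,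
    Rat.intCast_sub_den]

theorem squarefree_den_bernoulli (n : ℕ) : Squarefree (_root_.bernoulli n).den := by
  obtain ⟨k, rfl | rfl⟩ := Nat.even_or_odd' n
  · rw [den_bernoulli_two_mul]
    exact squarefree_prod_primes fun p hp => (mem_filter.mp hp).2.1
  · rcases Nat.eq_zero_or_pos k with rfl | hk
    · rw [mul_zero, zero_add, _root_.bernoulli_one, show (-1 / 2 : ℚ).den = 2 by norm_num]
      exact Nat.prime_two.squarefree
    · rw [bernoulli_eq_zero_of_odd (odd_two_mul_add_one k) (by omega), Rat.den_zero]
      exact squarefree_one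

theorem two_dvd_den_bernoulli_two_mul {k : ℕ} (hk : k ≠ 0) :
    2 ∣ (_root_.bernoulli (2 * k)).den := by
  rw [den_bernoulli_two_mul]
  exact dvd_prod_of_mem _ (mem_filter.mpr ⟨by simp; omega, Nat.prime_two, by simp⟩)

theorem den_coeff_bernoulli_dvd (n m : ℕ) :
    ((Polynomial.bernoulli n).coeff m).den ∣ (_root_.bernoulli (n - m)).den := by
  rw [coeff_bernoulli]
  split_ifs
  · simpa using Rat.mul_den_dvd (_root_.bernoulli (n - m)) (n.choose m)
  · simp

theorem den_coeff_bernoulli_sub_one {n : ℕ} (hn : Odd n) :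
    ((Polynomial.bernoulli n).coeff (n - 1)).den = 2 := by
  have hn1 : n - (n - 1) = 1 := by have := hn.pos; omega
  rw [coeff_bernoulli, if_pos (Nat.sub_le n 1), hn1, _root_.bernoulli_one,
    Nat.choose_symm hn.pos, Nat.choose_one_right]
  have hcoeff : (-1 / 2 * n : ℚ) = ((-n : ℤ) : ℚ) / ((2 : ℤ) : ℚ) := by push_cast; ring
  rw [hcoeff]
  exact_mod_cast Rat.den_div_eq_of_coprime two_pos (by simpa using hn)

theorem isIntPoly_natCast_smul_iff {P : ℚ[X]} {e : ℕ} :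
    isIntPoly ((e : ℚ) • P) ↔ ∀ m, (P.coeff m).den ∣ e := by
  simp only [isIntPoly, coeff_smul, smul_eq_mul, Rat.exists_intCast_eq_natCast_mul_iff]

namespace isDenom

variable {P : ℚ[X]} {D : ℕ}

theorem den_coeff_dvd (hD : isDenom P D) (m : ℕ) : (P.coeff m).den ∣ D :=
  isIntPoly_natCast_smul_iff.mp hD.2.1 m

theorem dvd_of_forall_den_coeff_dvd (hD : isDenom P D) {e : ℕ}
    (he : ∀ m, (P.coeff m).den ∣ e) : D ∣ e := by
  rcases Nat.eq_zero_or_pos e with rfl | he0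
  · exact dvd_zero D
  have hgcd : 0 < D.gcd e := Nat.gcd_pos_of_pos_right D he0
  have hle := hD.2.2 _ hgcd (isIntPoly_natCast_smul_iff.mpr fun m =>
    Nat.dvd_gcd (hD.den_coeff_dvd m) (he m))
  have hgcd_eq : D.gcd e = D := le_antisymm (Nat.le_of_dvd hD.1 (Nat.gcd_dvd_left D e)) hle
  exact hgcd_eq ▸ Nat.gcd_dvd_right D e

theorem squarefree (hD : isDenom P D) (h : ∀ m, Squarefree (P.coeff m).den) : Squarefree D := by
  have hD0 : D ≠ 0 := hD.1.ne'
  have hrad : D ∣ UniqueFactorizationMonoid.radical D := hD.dvd_of_forall_den_coeff_dvd fun m =>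
    (UniqueFactorizationMonoid.dvd_radical_iff (h m).isRadical hD0).mpr (hD.den_coeff_dvd m)
  exact (UniqueFactorizationMonoid.squarefree_radical).squarefree_of_dvd hrad

end isDenom

theorem stmt19 (n : ℕ) (hn : 1 ≤ n) (D : ℕ)
    (hD : isDenom (Polynomial.bernoulli n) D) :
    Even D ∧ Squarefree D ∧ (_root_.bernoulli n).den ∣ D := by
  have hB : (_root_.bernoulli n).den ∣ D := by
    simpa [coeff_bernoulli] using hD.den_coeff_dvd 0
  refine ⟨even_iff_two_dvd.mpr ?_, hD.squarefree fun m =>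
    (squarefree_den_bernoulli (n - m)).squarefree_of_dvd (den_coeff_bernoulli_dvd n m), hB⟩
  obtain ⟨k, rfl | rfl⟩ := Nat.even_or_odd' n
  · exact (two_dvd_den_bernoulli_two_mul (by omega)).trans hB
  · exact den_coeff_bernoulli_sub_one (odd_two_mul_add_one k) ▸ hD.den_coeff_dvd _
end
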